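/- arXiv:2411.05399 — 2 statements merged into one kernel-verified Lean document; each statement's English description precedes it below -/
import Mathlib

section
/- Let X be a nonempty finite type and let c : X → ℝ. Define q*(x) = exp(c(x)) / Σ_{x'} exp(c(x')). Then for every probability mass function q : X → ℝ (q ≥ 0, Σ_x q(x) = 1), the functional F(q) = Σ_{x : q(x)>0} q(x)·log q(x) − Σ_x q(x)·c(x) satisfies F(q) ≥ F(q*) = −log(Σ_{x'} exp(c(x'))), with equality if and only if q = q*. -/
open Finset

lemma gibbs_aux1 {a b : ℝ} (ha : 0 < a) (hb : 0 < b) :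
    a - b ≤ a * Real.log (a / b) := by
  have h := Real.log_le_sub_one_of_pos (div_pos hb ha)
  rw [Real.log_div hb.ne' ha.ne'] at h
  have h2 : a * (Real.log b - Real.log a) ≤ a * (b / a - 1) :=
    mul_le_mul_of_nonneg_left h ha.le
  have h3 : a * (b / a) = b := mul_div_cancel₀ b ha.ne'
  rw [Real.log_div ha.ne' hb.ne']
  nlinarith [h2, h3]

lemma gibbs_aux2 {a b : ℝ} (ha : 0 < a) (hb : 0 < b) (hne : a ≠ b) :
    a - b < a * Real.log (a / b) := by
  have hne' : b / a ≠ 1 := by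
    intro h
    exact hne (by field_simp at h; linarith)
  have h := Real.log_lt_sub_one_of_pos (div_pos hb ha) hne'
  rw [Real.log_div hb.ne' ha.ne'] at h
  have h2 : a * (Real.log b - Real.log a) < a * (b / a - 1) :=
    mul_lt_mul_of_pos_left h ha
  have h3 : a * (b / a) = b := mul_div_cancel₀ b ha.ne'
  rw [Real.log_div ha.ne' hb.ne']
  nlinarith [h2, h3]

/-- Gibbs variational principle: for `c : X → ℝ` on a nonempty finite type and the
softmax distribution `q*(x) = exp(c x) / ∑ x', exp(c x')`, the free-energy
functional `F(q) = ∑_{x : q(x)>0} q(x)·log q(x) − ∑ x, q(x)·c(x)` satisfies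
`F(q*) = −log(∑ x', exp(c x'))`, and for every pmf `q`, `F(q) ≥ F(q*)` with
equality if and only if `q = q*`. -/
theorem stmt10 {X : Type*} [Fintype X] [Nonempty X] (c : X → ℝ)
    (qstar : X → ℝ)
    (hqstar : qstar = fun x => Real.exp (c x) / ∑ x' : X, Real.exp (c x')) :
    ((∑ x ∈ Finset.univ.filter (fun x => 0 < qstar x), qstar x * Real.log (qstar x)) -
        (∑ x : X, qstar x * c x) = -Real.log (∑ x' : X, Real.exp (c x'))) ∧
      ∀ q : X → ℝ, (∀ x, 0 ≤ q x) → (∑ x : X, q x = 1) →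
        ((∑ x ∈ Finset.univ.filter (fun x => 0 < q x), q x * Real.log (q x)) -
            (∑ x : X, q x * c x) ≥ -Real.log (∑ x' : X, Real.exp (c x'))) ∧
          (((∑ x ∈ Finset.univ.filter (fun x => 0 < q x), q x * Real.log (q x)) -
              (∑ x : X, q x * c x) = -Real.log (∑ x' : X, Real.exp (c x'))) ↔
            q = qstar) := by
  set Z : ℝ := ∑ x' : X, Real.exp (c x') with hZdef
  have hZ : 0 < Z := Finset.sum_pos (fun x _ => Real.exp_pos _) univ_nonempty
  have hp : ∀ x, 0 < qstar x := by
    intro x; rw [hqstar]; exact div_pos (Real.exp_pos _) hZ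
  have hlogp : ∀ x, Real.log (qstar x) = c x - Real.log Z := by
    intro x
    rw [hqstar]
    simp only
    rw [Real.log_div (Real.exp_pos _).ne' hZ.ne', Real.log_exp]
  have hpsum : ∑ x : X, qstar x = 1 := by
    rw [hqstar]
    simp only
    rw [← Finset.sum_div]
    exact div_self hZ.ne'
  have hfilter : (univ.filter fun x => 0 < qstar x) = (univ : Finset X) :=
    filter_true_of_mem (fun x _ => hp x)
  have part1 : (∑ x ∈ Finset.univ.filter (fun x => 0 < qstar x), qstar x * Real.log (qstar x)) -
      (∑ x : X, qstar x * c x) = -Real.log Z := by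
    rw [hfilter]
    have hterm : ∀ x ∈ (univ : Finset X),
        qstar x * Real.log (qstar x) = qstar x * c x + qstar x * (-Real.log Z) := by
      intro x _
      rw [hlogp x]; ring
    rw [Finset.sum_congr rfl hterm, Finset.sum_add_distrib, ← Finset.sum_mul, hpsum]
    ring
  refine ⟨part1, fun q hq hqsum => ?_⟩
  set S : Finset X := univ.filter (fun x => 0 < q x) with hSdef
  have hqS : ∑ x ∈ S, q x = 1 := by
    rw [← hqsum]
    exact Finset.sum_filter_of_ne (fun x _ h => lt_of_le_of_ne (hq x) (Ne.symm h))
  have hcS : ∑ x ∈ S, q x * c x = ∑ x : X, q x * c x := by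
    refine Finset.sum_filter_of_ne (fun x _ h => ?_)
    rcases lt_or_eq_of_le (hq x) with h' | h'
    · exact h'
    · exact absurd (by rw [← h']; ring) h
  have key : (∑ x ∈ S, q x * Real.log (q x)) - (∑ x : X, q x * c x) + Real.log Z
      = ∑ x ∈ S, q x * Real.log (q x / qstar x) := by
    have hterm : ∀ x ∈ S, q x * Real.log (q x / qstar x)
        = q x * Real.log (q x) - q x * c x + q x * Real.log Z := by
      intro x hx
      have hqx : 0 < q x := (mem_filter.mp hx).2
      rw [Real.log_div hqx.ne' (hp x).ne', hlogp x]; ring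
    rw [Finset.sum_congr rfl hterm, Finset.sum_add_distrib, Finset.sum_sub_distrib,
      ← Finset.sum_mul, hqS, hcS]
    ring
  have hge : ∑ x ∈ S, (q x - qstar x) ≤ ∑ x ∈ S, q x * Real.log (q x / qstar x) :=
    Finset.sum_le_sum (fun x hx => gibbs_aux1 (mem_filter.mp hx).2 (hp x))
  have hsumS : ∑ x ∈ S, (q x - qstar x) = 1 - ∑ x ∈ S, qstar x := by
    rw [Finset.sum_sub_distrib, hqS]
  have hSle : ∑ x ∈ S, qstar x ≤ 1 := by
    rw [← hpsum]
    exact Finset.sum_le_sum_of_subset_of_nonneg (filter_subset _ _)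
      (fun x _ _ => (hp x).le)
  have hineq : (∑ x ∈ S, q x * Real.log (q x)) - (∑ x : X, q x * c x) ≥ -Real.log Z := by
    linarith [key, hge, hsumS, hSle]
  refine ⟨hineq, ?_, ?_⟩
  · -- forward: equality implies q = qstar
    intro heq
    have hKL : ∑ x ∈ S, q x * Real.log (q x / qstar x) = 0 := by linarith [key]
    have hSp1 : ∑ x ∈ S, qstar x = 1 := by linarith [hge, hsumS]
    have hallpos : ∀ x, 0 < q x := by
      by_contra hcon
      push_neg at hcon
      obtain ⟨x0, hx0⟩ := hcon
      have hx0S : x0 ∉ S := by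
        simp only [hSdef, mem_filter, mem_univ, true_and]
        exact not_lt_of_ge hx0
      have : ∑ x ∈ S, qstar x < ∑ x : X, qstar x :=
        Finset.sum_lt_sum_of_subset (filter_subset _ _) (mem_univ x0) hx0S (hp x0)
          (fun j _ _ => (hp j).le)
      rw [hpsum, hSp1] at this
      exact lt_irrefl 1 this
    have hSuniv : S = univ := filter_true_of_mem (fun x _ => hallpos x)
    have hterms : ∀ x ∈ S, q x * Real.log (q x / qstar x) - (q x - qstar x) = 0 := by
      have hnn : ∀ x ∈ S, 0 ≤ q x * Real.log (q x / qstar x) - (q x - qstar x) :=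
        fun x hx => sub_nonneg.mpr (gibbs_aux1 (mem_filter.mp hx).2 (hp x))
      have hsum0 : ∑ x ∈ S, (q x * Real.log (q x / qstar x) - (q x - qstar x)) = 0 := by
        rw [Finset.sum_sub_distrib, hKL, hsumS, hSp1]; ring
      exact fun x hx => (Finset.sum_eq_zero_iff_of_nonneg hnn).mp hsum0 x hx
    funext x
    by_contra hne
    have hx : x ∈ S := by rw [hSuniv]; exact mem_univ x
    have := gibbs_aux2 (hallpos x) (hp x) hne
    have h0 := hterms x hx
    linarith
  · -- backward: q = qstar implies equality
    intro h
    rw [hSdef, h]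
    exact part1
end

section
/- Let I be a nonempty finite index set, for each i ∈ I let X_i be a nonempty finite type, and let P be a strictly positive probability mass function on the product Π_{i∈I} X_i. Fix a ∈ I and, for each j ≠ a, fix a strictly positive probability mass function q_j on X_j. Define q_a* on X_a by q_a*(x_a) ∝ exp( Σ_{x_{−a}} (Π_{j≠a} q_j(x_j)) · log P(x_a, x_{−a}) ), where x_{−a} ranges over Π_{j≠a} X_j and (x_a, x_{−a}) denotes the element of the full product with a-th coordinate x_a. Then for every strictly positive probability mass function q_a on X_a, the product distribution Q[q_a] defined by Q[q_a](x) = q_a(x_a)·Π_{j≠a} q_j(x_j) satisfies KL(Q[q_a] ‖ P) ≥ KL(Q[q_a*] ‖ P); that is, q_a* minimizes the Kullback–Leibler divergence to P over the a-th factor with the other factors held fixed. -/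
open Finset

/-- Combine a value `xa : X a` with an assignment `xrest` of all coordinates `j ≠ a`
into an element of the full product `∀ i, X i`. -/
def mfCombine {I : Type*} [DecidableEq I] {X : I → Type*} (a : I) (xa : X a)
    (xrest : ∀ j : {j : I // j ≠ a}, X j.1) : ∀ i, X i :=
  fun i => if h : i = a then cast (congrArg X h).symm xa else xrest ⟨i, h⟩


section aux
variable {I : Type*} [DecidableEq I] {X : I → Type*} (a : I)

@[simp] lemma mfCombine_apply_a (xa : X a) (xrest : ∀ j : {j : I // j ≠ a}, X j.1) :
    mfCombine a xa xrest a = xa := by simp [mfCombine]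

@[simp] lemma mfCombine_apply_ne (xa : X a) (xrest : ∀ j : {j : I // j ≠ a}, X j.1)
    (j : {j : I // j ≠ a}) : mfCombine a xa xrest j.1 = xrest j := by
  simp [mfCombine, j.2]

def mfEquiv : (X a × ∀ j : {j : I // j ≠ a}, X j.1) ≃ (∀ i, X i) where
  toFun p := mfCombine a p.1 p.2
  invFun x := (x a, fun j => x j.1)
  left_inv p := by ext <;> simp
  right_inv x := by
    funext i
    by_cases h : i = a
    · subst h; simp
    · simp [mfCombine, h]

end aux

/-- Mean-field coordinate update: with `P` a strictly positive pmf on the product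
`∀ i, X i`, a fixed coordinate `a`, and strictly positive pmfs `q_j` on the other
coordinates, the distribution `q_a*(x_a) ∝ exp(E_{−a}[log P(x_a, ·)])` minimizes
the KL divergence `KL(Q[q_a] ‖ P)` of the product distribution
`Q[q_a](x) = q_a(x_a)·∏_{j≠a} q_j(x_j)` over all strictly positive pmfs `q_a` on `X a`. -/


theorem stmt11 {I : Type*} [Fintype I] [Nonempty I] [DecidableEq I]
    {X : I → Type*} [∀ i, Fintype (X i)] [∀ i, Nonempty (X i)]
    (P : (∀ i, X i) → ℝ) (hPpos : ∀ x, 0 < P x) (hPsum : ∑ x : ∀ i, X i, P x = 1)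
    (a : I)
    (q : ∀ j : {j : I // j ≠ a}, X j.1 → ℝ)
    (hqpos : ∀ j xj, 0 < q j xj) (hqsum : ∀ j, ∑ xj : X j.1, q j xj = 1)
    (qstar : X a → ℝ)
    (hqstar : qstar = fun xa =>
      Real.exp (∑ xrest : ∀ j : {j : I // j ≠ a}, X j.1,
          (∏ j : {j : I // j ≠ a}, q j (xrest j)) * Real.log (P (mfCombine a xa xrest))) /
        ∑ xa' : X a,
          Real.exp (∑ xrest : ∀ j : {j : I // j ≠ a}, X j.1,
            (∏ j : {j : I // j ≠ a}, q j (xrest j)) * Real.log (P (mfCombine a xa' xrest)))) :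
    ∀ qa : X a → ℝ, (∀ xa, 0 < qa xa) → (∑ xa : X a, qa xa = 1) →
      ∑ x : ∀ i, X i,
          (qstar (x a) * ∏ j : {j : I // j ≠ a}, q j (x j.1)) *
            Real.log ((qstar (x a) * ∏ j : {j : I // j ≠ a}, q j (x j.1)) / P x) ≤
        ∑ x : ∀ i, X i,
          (qa (x a) * ∏ j : {j : I // j ≠ a}, q j (x j.1)) *
            Real.log ((qa (x a) * ∏ j : {j : I // j ≠ a}, q j (x j.1)) / P x) := by
  intro qa hqapos hqasum
  set Y := ∀ j : {j : I // j ≠ a}, X j.1 with hY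
  set w : Y → ℝ := fun y => ∏ j, q j (y j) with hw
  have hwpos : ∀ y, 0 < w y := fun y => Finset.prod_pos fun j _ => hqpos j _
  have hwsum : ∑ y : Y, w y = 1 := by
    have h1 : ∑ y : Y, ∏ j : {j : I // j ≠ a}, q j (y j)
        = ∏ j : {j : I // j ≠ a}, ∑ xj : X j.1, q j xj := by
      rw [Finset.prod_univ_sum]
      rw [Fintype.piFinset_univ]
    simp only [hw, h1, hqsum, Finset.prod_const_one]
  set f : X a → ℝ := fun xa => ∑ y : Y, w y * Real.log (P (mfCombine a xa y)) with hf
  set Z : ℝ := ∑ xa' : X a, Real.exp (f xa') with hZ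
  have hZpos : 0 < Z := Finset.sum_pos (fun _ _ => Real.exp_pos _) Finset.univ_nonempty
  have hqs : ∀ xa, qstar xa = Real.exp (f xa) / Z := fun xa => by rw [hqstar]
  have hqspos : ∀ xa, 0 < qstar xa := fun xa => by
    rw [hqs]; exact div_pos (Real.exp_pos _) hZpos
  have hqssum : ∑ xa : X a, qstar xa = 1 := by
    simp only [hqs]
    rw [← Finset.sum_div, ← hZ, div_self hZpos.ne']
  have hlogqs : ∀ xa, Real.log (qstar xa) = f xa - Real.log Z := fun xa => by
    rw [hqs, Real.log_div (Real.exp_pos _).ne' hZpos.ne', Real.log_exp]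
  -- decomposition of the objective
  have key : ∀ g : X a → ℝ, (∀ xa, 0 < g xa) →
      ∑ x : ∀ i, X i,
          (g (x a) * ∏ j : {j : I // j ≠ a}, q j (x j.1)) *
            Real.log ((g (x a) * ∏ j : {j : I // j ≠ a}, q j (x j.1)) / P x)
      = ∑ xa : X a, (g xa * Real.log (g xa) + g xa * (∑ y : Y, w y * Real.log (w y))
          - g xa * f xa) := by
    intro g hg
    rw [← Equiv.sum_comp (mfEquiv a)]
    rw [Fintype.sum_prod_type]
    refine Finset.sum_congr rfl fun xa _ => ?_
    have : ∀ y : Y, (g ((mfEquiv a (xa, y)) a) * ∏ j : {j : I // j ≠ a}, q j ((mfEquiv a (xa, y)) j.1)) *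
        Real.log ((g ((mfEquiv a (xa, y)) a) * ∏ j : {j : I // j ≠ a}, q j ((mfEquiv a (xa, y)) j.1)) / P (mfEquiv a (xa, y)))
        = g xa * Real.log (g xa) * w y + g xa * (w y * Real.log (w y))
          - g xa * (w y * Real.log (P (mfCombine a xa y))) := by
      intro y
      have hme : mfEquiv a (xa, y) = mfCombine a xa y := rfl
      simp only [hme, mfCombine_apply_a, mfCombine_apply_ne, ← hw]
      rw [Real.log_div (mul_pos (hg xa) (hwpos y)).ne' (hPpos _).ne',
        Real.log_mul (hg xa).ne' (hwpos y).ne']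
      ring
    rw [Finset.sum_congr rfl fun y _ => this y]
    rw [Finset.sum_sub_distrib, Finset.sum_add_distrib, ← Finset.mul_sum, hwsum,
      ← Finset.mul_sum, ← Finset.mul_sum]
    ring
  rw [key qa hqapos, key qstar hqspos]
  have hfeq : ∀ g : X a → ℝ, (∑ xa, g xa = 1) →
      ∑ xa : X a, g xa * f xa = (∑ xa : X a, g xa * Real.log (qstar xa)) + Real.log Z := by
    intro g hg
    have : ∀ xa, g xa * f xa = g xa * Real.log (qstar xa) + g xa * Real.log Z := by
      intro xa; rw [hlogqs]; ring
    rw [Finset.sum_congr rfl fun xa _ => this xa, Finset.sum_add_distrib, ← Finset.sum_mul, hg,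
      one_mul]
  rw [Finset.sum_sub_distrib, Finset.sum_sub_distrib, Finset.sum_add_distrib,
    Finset.sum_add_distrib, ← Finset.sum_mul, ← Finset.sum_mul, hqasum, hqssum,
    hfeq qa hqasum, hfeq qstar hqssum]
  have gibbs : ∑ xa : X a, qstar xa * Real.log (qstar xa)
      - ∑ xa : X a, qstar xa * Real.log (qstar xa)
      ≤ ∑ xa : X a, qa xa * Real.log (qa xa) - ∑ xa : X a, qa xa * Real.log (qstar xa) := by
    rw [sub_self, ← Finset.sum_sub_distrib]
    have : ∀ xa, 0 ≤ qa xa * Real.log (qa xa) - qa xa * Real.log (qstar xa)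
        - (qa xa - qstar xa) := by
      intro xa
      have h1 : Real.log (qstar xa / qa xa) ≤ qstar xa / qa xa - 1 :=
        Real.log_le_sub_one_of_pos (div_pos (hqspos xa) (hqapos xa))
      rw [Real.log_div (hqspos xa).ne' (hqapos xa).ne'] at h1
      have := mul_le_mul_of_nonneg_left h1 (hqapos xa).le
      have h2 : qa xa * (qstar xa / qa xa - 1) = qstar xa - qa xa := by
        rw [mul_sub, mul_one, mul_div_cancel₀ _ (hqapos xa).ne']
      nlinarith
    have h3 : ∑ xa : X a, (qa xa - qstar xa) = 0 := by
      rw [Finset.sum_sub_distrib, hqasum, hqssum]; ring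
    calc (0:ℝ) = ∑ xa : X a, (qa xa - qstar xa) := h3.symm
      _ ≤ ∑ xa : X a, (qa xa * Real.log (qa xa) - qa xa * Real.log (qstar xa)) :=
        Finset.sum_le_sum fun xa _ => by linarith [this xa]
  linarith [gibbs]
end
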